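/- Let 0 ≤ p < p_W < 1/2. For q ∈ [0,1] define the binary convolution q⋆α := q(1−α) + (1−q)α, and define F(q) := [h(q⋆p) − h(p)] − [h(q⋆p_W) − h(p_W)] (the difference of the mutual informations of the main BSC(p) channel and the wiretap BSC(p_W) channel under a Bernoulli(q) input). Then sup_{q∈[0,1]} F(q) = h(p_W) − h(p), and the supremum is attained at q = 1/2. In particular, the secrecy capacity of the BSC(p)/BSC(p_W) wiretap pair equals h(p_W) − h(p). -/

import Mathlib

/-!
Write `q ⋆ α - 1/2 = (q - 1/2)(1 - 2α)`: passing through a noisier channel pulls the output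
bias towards `1/2`, and binary entropy increases as its argument approaches `1/2`. Hence
`h(q ⋆ p) ≤ h(q ⋆ p_W)` for every `q`, i.e. `F q ≤ h(p_W) - h(p) = F (1/2)`.
-/

/-- Binary entropy function (base 2): `h(x) = -x log₂ x - (1-x) log₂ (1-x)`,
with the convention `h(0) = h(1) = 0` (since `Real.logb 2 0 = 0`). -/
noncomputable def binEnt (x : ℝ) : ℝ := -(x * Real.logb 2 x) - (1 - x) * Real.logb 2 (1 - x)

/-- Binary convolution: `q ⋆ α = q(1-α) + (1-q)α`. -/
def binConv (q α : ℝ) : ℝ := q * (1 - α) + (1 - q) * α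

open Real

lemma binEnt_eq_binEntropy_div_log_two (x : ℝ) : binEnt x = binEntropy x / log 2 := by
  simp only [binEnt, binEntropy, logb, log_inv]
  ring

lemma binConv_eq_two_inv_add (q α : ℝ) : binConv q α = 2⁻¹ + (q - 2⁻¹) * (1 - 2 * α) := by
  unfold binConv
  ring

lemma binConv_one_half_left (α : ℝ) : binConv (1 / 2) α = 1 / 2 := by
  unfold binConv
  ring

lemma binEntropy_two_inv_sub_abs (t : ℝ) : binEntropy (2⁻¹ - |t|) = binEntropy (2⁻¹ + t) := by
  rcases abs_cases t with ⟨ht, -⟩ | ⟨ht, -⟩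
  · rw [ht, binEntropy_two_inv_add]
  · rw [ht, sub_neg_eq_add]

lemma binEntropy_two_inv_add_le {s t : ℝ} (hst : |s| ≤ |t|) (ht : |t| ≤ 2⁻¹) :
    binEntropy (2⁻¹ + t) ≤ binEntropy (2⁻¹ + s) := by
  rw [← binEntropy_two_inv_sub_abs, ← binEntropy_two_inv_sub_abs]
  have hs := abs_nonneg s
  exact binEntropy_strictMonoOn.monotoneOn ⟨by linarith, by linarith⟩ ⟨by linarith, by linarith⟩
    (by linarith)

lemma binEnt_binConv_le_of_le {q α β : ℝ} (hq : q ∈ Set.Icc 0 1) (hα : 0 ≤ α) (hαβ : α ≤ β)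
    (hβ : β ≤ 2⁻¹) : binEnt (binConv q α) ≤ binEnt (binConv q β) := by
  have hq' : |q - 2⁻¹| ≤ 2⁻¹ := abs_le.mpr ⟨by linarith [hq.1], by linarith [hq.2]⟩
  have hbias (γ : ℝ) (hγ : γ ≤ 2⁻¹) : |(q - 2⁻¹) * (1 - 2 * γ)| = |q - 2⁻¹| * (1 - 2 * γ) := by
    rw [abs_mul, abs_of_nonneg (show 0 ≤ 1 - 2 * γ by linarith)]
  have hbias_le : |q - 2⁻¹| * (1 - 2 * β) ≤ |q - 2⁻¹| * (1 - 2 * α) :=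
    mul_le_mul_of_nonneg_left (by linarith) (abs_nonneg _)
  have hbias_α : |q - 2⁻¹| * (1 - 2 * α) ≤ 2⁻¹ :=
    (mul_le_of_le_one_right (abs_nonneg _) (by linarith)).trans hq'
  rw [binEnt_eq_binEntropy_div_log_two, binEnt_eq_binEntropy_div_log_two,
    binConv_eq_two_inv_add, binConv_eq_two_inv_add]
  gcongr
  exact binEntropy_two_inv_add_le (by rw [hbias α (by linarith), hbias β hβ]; exact hbias_le)
    (by rw [hbias α (by linarith)]; exact hbias_α)

/-- For `0 ≤ p < p_W < 1/2`, the function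
`F(q) = [h(q⋆p) - h(p)] - [h(q⋆p_W) - h(p_W)]` (difference of the mutual informations of
the main `BSC(p)` and wiretap `BSC(p_W)` channels under a `Bernoulli(q)` input) attains its
supremum over `q ∈ [0,1]` at `q = 1/2`, and the supremum equals `h(p_W) - h(p)`:
the secrecy capacity of the BSC wiretap pair. -/
theorem bsc_secrecy_capacity (p pW : ℝ) (hp : 0 ≤ p) (hppW : p < pW) (hpW : pW < 1 / 2)
    (F : ℝ → ℝ)
    (hF : ∀ q, F q = (binEnt (binConv q p) - binEnt p) - (binEnt (binConv q pW) - binEnt pW)) :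
    IsGreatest (F '' Set.Icc 0 1) (binEnt pW - binEnt p) ∧
      F (1 / 2) = binEnt pW - binEnt p := by
  have hF_half : F (1 / 2) = binEnt pW - binEnt p := by
    rw [hF, binConv_one_half_left, binConv_one_half_left]
    ring
  refine ⟨⟨⟨1 / 2, ⟨by norm_num, by norm_num⟩, hF_half⟩, ?_⟩, hF_half⟩
  rintro _ ⟨q, hq, rfl⟩
  have := binEnt_binConv_le_of_le hq hp hppW.le (by linarith)
  rw [hF]
  linarith
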